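/- arXiv:1311.6156 — 2 statements merged into one kernel-verified Lean document; each statement's English description precedes it below -/
import Mathlib

section
/- Let $G$ be a discrete group and $R$ a commutative ring. A short exact sequence of $RG$-modules splits when restricted to every finite subgroup $H \leq G$ if and only if it splits after applying $- \otimes_R R\Delta$, where $\Delta = \coprod_{H \in \mathfrak{F}} G/H$ is the disjoint union of the coset spaces of the finite subgroups of $G$. -/
open CategoryTheory CategoryTheory.Limits CategoryTheory.MonoidalCategory

noncomputable section
namespace FPaper

variable (R : Type) [CommRing R] (G : Type) [Group G]

/-- The disjoint union `Δ = ⨿_{H finite} G/H` of coset spaces of finite subgroups. -/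
def DeltaType : Type := Σ H : {H : Subgroup G // Finite H}, G ⧸ H.1

instance : SMul G (DeltaType G) := ⟨fun g x => ⟨x.1, g • x.2⟩⟩

instance : MulAction G (DeltaType G) where
  one_smul x := by cases x with | mk H q => show (⟨H, (1:G) • q⟩ : DeltaType G) = ⟨H, q⟩; rw [one_smul]
  mul_smul g h x := by
    cases x with | mk H q =>
    show (⟨H, (g*h) • q⟩ : DeltaType G) = ⟨H, g • h • q⟩
    rw [mul_smul]

/-- The permutation module `RΔ`. -/
def RDelta : Rep R G := Rep.ofMulAction R G (DeltaType G)

/-- A module is `𝔉`-projective if it is a direct summand of some `N ⊗ RΔ`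
(diagonal `G`-action). -/
def FProjective (M : Rep R G) : Prop :=
  ∃ (N : Rep R G) (i : M ⟶ N ⊗ RDelta R G) (r : N ⊗ RDelta R G ⟶ M), i ≫ r = 𝟙 M

/-- Restriction to a subgroup. -/
def resF (K : Subgroup G) : Rep.{0} R G ⥤ Rep.{0} R K :=
  Rep.resFunctor K.subtype

/-- A resolution `⋯ → P₁ → P₀ → M → 0`. -/
structure Res (M : Rep R G) where
  P : ℕ → Rep R G
  d : ∀ n, P (n+1) ⟶ P n
  ε : P 0 ⟶ M
  surj : Function.Surjective ε.hom
  exact0 : Function.Exact (d 0).hom ε.hom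
  exact : ∀ n, Function.Exact (d (n+1)).hom (d n).hom

variable {R G}

/-- The (augmented) resolution is split exact over every finite subgroup:
there is an `RK`-linear chain contraction for every finite `K ≤ G`. -/
def Res.FSplit {M : Rep R G} (res : Res R G M) : Prop :=
  ∀ K : Subgroup G, Finite K →
    ∃ (t : (resF R G K).obj M ⟶ (resF R G K).obj (res.P 0))
      (s : ∀ n, (resF R G K).obj (res.P n) ⟶ (resF R G K).obj (res.P (n+1))),
      t ≫ (resF R G K).map res.ε = 𝟙 _ ∧
      (resF R G K).map res.ε ≫ t + s 0 ≫ (resF R G K).map (res.d 0) = 𝟙 _ ∧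
      ∀ n, (resF R G K).map (res.d n) ≫ s n + s (n+1) ≫ (resF R G K).map (res.d (n+1)) = 𝟙 _

/-- All modules in the resolution are `𝔉`-projective. -/
def Res.FProj {M : Rep R G} (res : Res R G M) : Prop := ∀ n, FProjective R G (res.P n)

/-- The resolution has length at most `n`. -/
def Res.LengthLe {M : Rep R G} (res : Res R G M) (n : ℕ) : Prop :=
  ∀ i, n < i → IsZero (res.P i)

/-!
If `s` is a `G`-equivariant section of `g ⊗ RΔ` and `K` is finite, the basepoint `x₀ = 1·K ∈ Δ` is
fixed by `K`, so `c ↦ (x₀-coefficient of s (c ⊗ x₀))` is a `K`-equivariant section of `g`.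
Conversely, given `H`-equivariant sections `t_H` of `g` for all finite `H`, the maps
`σ_{aH} = ρ_B(a) ∘ t_H ∘ ρ_C(a⁻¹)` are well defined and satisfy `σ_{u•x} ∘ ρ_C(u) = ρ_B(u) ∘ σ_x`,
so `c ⊗ x ↦ σ_x(c) ⊗ x` is a `G`-equivariant section of `g ⊗ RΔ`.
-/

section PermutationTensor

variable {X : Type} [MulAction G X]

lemma tensor_ofMulAction_ρ_tmul_single (B : Rep R G) (u : G) (b : B.V) (x : X) (r : R) :
    (B ⊗ Rep.ofMulAction R G X).ρ u (b ⊗ₜ MonoidAlgebra.single x r) =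
      B.ρ u b ⊗ₜ MonoidAlgebra.single (u • x) r := by
  change B.ρ u b ⊗ₜ Representation.ofMulAction R G X u (MonoidAlgebra.single x r) = _
  rw [Representation.ofMulAction_single]

lemma tensor_ofMulAction_ext {M N : Type} [AddCommGroup M] [Module R M] [AddCommGroup N]
    [Module R N] {L₁ L₂ : TensorProduct R M (MonoidAlgebra R X) →ₗ[R] N}
    (h : ∀ (c : M) (x : X),
      L₁ (c ⊗ₜ MonoidAlgebra.single x 1) = L₂ (c ⊗ₜ MonoidAlgebra.single x 1)) :
    L₁ = L₂ := by
  refine TensorProduct.ext (LinearMap.ext fun c => MonoidAlgebra.lhom_ext' fun x =>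
    LinearMap.ext_ring ?_)
  simpa using h c x

def tensorCoeff (B : Type) [AddCommGroup B] [Module R B] (x : X) :
    TensorProduct R B (MonoidAlgebra R X) →ₗ[R] B :=
  TensorProduct.lift ((LinearMap.lsmul R B ∘ₗ Finsupp.lapply x ∘ₗ
    (MonoidAlgebra.coeffLinearEquiv R).toLinearMap).flip)

@[simp]
lemma tensorCoeff_tmul (B : Type) [AddCommGroup B] [Module R B] (x : X) (b : B)
    (f : MonoidAlgebra R X) : tensorCoeff B x (b ⊗ₜ f) = f.coeff x • b :=
  rfl

lemma tensorCoeff_ρ_of_smul_eq (B : Rep R G) {u : G} {x : X} (hx : u • x = x)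
    (z : TensorProduct R B.V (MonoidAlgebra R X)) :
    tensorCoeff B.V x ((B ⊗ Rep.ofMulAction R G X).ρ u z) = B.ρ u (tensorCoeff B.V x z) := by
  induction z using TensorProduct.induction_on with
  | zero => simp
  | add z₁ z₂ h₁ h₂ => simp only [map_add, h₁, h₂]
  | tmul b f =>
    change tensorCoeff B.V x (B.ρ u b ⊗ₜ Representation.ofMulAction R G X u f) = _
    rw [tensorCoeff_tmul, tensorCoeff_tmul, Representation.coeff_ofMulAction,
      inv_smul_eq_iff.mpr hx.symm, map_smul]

lemma tensorCoeff_whiskerRight {B C : Rep R G} (g : B ⟶ C) (x : X)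
    (z : TensorProduct R B.V (MonoidAlgebra R X)) :
    tensorCoeff C.V x ((g ▷ Rep.ofMulAction R G X).hom z) = g.hom (tensorCoeff B.V x z) := by
  induction z using TensorProduct.induction_on with
  | zero => simp
  | add z₁ z₂ h₁ h₂ => simp only [map_add, h₁, h₂]
  | tmul b f =>
    change tensorCoeff C.V x (g.hom b ⊗ₜ f) = _
    rw [tensorCoeff_tmul, tensorCoeff_tmul, map_smul]

def diagonalMap {B C : Type} [AddCommGroup B] [Module R B] [AddCommGroup C] [Module R C]
    (σ : X → C →ₗ[R] B) :
    TensorProduct R C (MonoidAlgebra R X) →ₗ[R] TensorProduct R B (MonoidAlgebra R X) :=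
  TensorProduct.lift ((Finsupp.lsum R (fun x => LinearMap.toSpanSingleton R _
      ((TensorProduct.mk R B _).flip (MonoidAlgebra.single x 1) ∘ₗ σ x)) ∘ₗ
    (MonoidAlgebra.coeffLinearEquiv R).toLinearMap).flip)

lemma diagonalMap_tmul_single {B C : Type} [AddCommGroup B] [Module R B] [AddCommGroup C]
    [Module R C] (σ : X → C →ₗ[R] B) (c : C) (x : X) :
    diagonalMap σ (c ⊗ₜ MonoidAlgebra.single x 1) = σ x c ⊗ₜ MonoidAlgebra.single x 1 := by
  simp [diagonalMap]

theorem exists_section_whiskerRight_of_equivariant_sections {B C : Rep R G} (g : B ⟶ C)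
    (σ : X → C.V →ₗ[R] B.V) (hσ : ∀ u x c, σ (u • x) (C.ρ u c) = B.ρ u (σ x c))
    (hσg : ∀ x c, g.hom (σ x c) = c) :
    ∃ s : C ⊗ Rep.ofMulAction R G X ⟶ B ⊗ Rep.ofMulAction R G X,
      s ≫ g ▷ Rep.ofMulAction R G X = 𝟙 _ := by
  refine ⟨Rep.ofHom ⟨diagonalMap σ, fun u => tensor_ofMulAction_ext fun c x => ?_⟩, ?_⟩
  · change diagonalMap σ ((C ⊗ Rep.ofMulAction R G X).ρ u (c ⊗ₜ MonoidAlgebra.single x 1)) =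
      (B ⊗ Rep.ofMulAction R G X).ρ u (diagonalMap σ (c ⊗ₜ MonoidAlgebra.single x 1))
    rw [tensor_ofMulAction_ρ_tmul_single, diagonalMap_tmul_single, diagonalMap_tmul_single,
      tensor_ofMulAction_ρ_tmul_single, hσ]
  · refine Rep.hom_ext (Representation.IntertwiningMap.ext
      (tensor_ofMulAction_ext fun c x => ?_))
    change (g ▷ Rep.ofMulAction R G X).hom (diagonalMap σ _) = _
    rw [diagonalMap_tmul_single]
    change g.hom (σ x c) ⊗ₜ _ = _
    rw [hσg]
    rfl

theorem exists_res_section_of_section_whiskerRight {B C : Rep R G} {g : B ⟶ C} {K : Subgroup G}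
    {x₀ : X} (hx₀ : ∀ k ∈ K, k • x₀ = x₀)
    {s : C ⊗ Rep.ofMulAction R G X ⟶ B ⊗ Rep.ofMulAction R G X}
    (hs : s ≫ g ▷ Rep.ofMulAction R G X = 𝟙 _) :
    ∃ t : (resF R G K).obj C ⟶ (resF R G K).obj B, t ≫ (resF R G K).map g = 𝟙 _ := by
  let t : C.V →ₗ[R] B.V := tensorCoeff B.V x₀ ∘ₗ s.hom.toLinearMap ∘ₗ
    (TensorProduct.mk R C.V _).flip (MonoidAlgebra.single x₀ 1)
  refine ⟨Rep.ofHom ⟨t, fun k => LinearMap.ext fun c => ?_⟩, ?_⟩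
  · change tensorCoeff B.V x₀ (s.hom (C.ρ k c ⊗ₜ MonoidAlgebra.single x₀ 1)) =
      B.ρ k (tensorCoeff B.V x₀ (s.hom (c ⊗ₜ MonoidAlgebra.single x₀ 1)))
    rw [← tensorCoeff_ρ_of_smul_eq B (hx₀ k k.2), ← Rep.hom_comm_apply,
      tensor_ofMulAction_ρ_tmul_single, hx₀ k k.2]
  · refine Rep.hom_ext (Representation.IntertwiningMap.ext (LinearMap.ext fun (c : C.V) => ?_))
    change g.hom (tensorCoeff B.V x₀ (s.hom (c ⊗ₜ _))) = c
    rw [← tensorCoeff_whiskerRight, ← Rep.comp_apply, hs, Rep.id_apply, tensorCoeff_tmul,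
      MonoidAlgebra.coeff_single, Finsupp.single_eq_same, one_smul]

end PermutationTensor

lemma ρ_mul_apply (B : Rep R G) (a b : G) (v : B.V) : B.ρ (a * b) v = B.ρ a (B.ρ b v) := by
  rw [map_mul, Module.End.mul_apply]

section Delta

variable {B C : Rep R G}

def translatedSection
    (t : ∀ H : {H : Subgroup G // Finite H}, (resF R G H.1).obj C ⟶ (resF R G H.1).obj B)
    (x : DeltaType G) : C.V →ₗ[R] B.V :=
  Quotient.liftOn' x.2 (fun a => B.ρ a ∘ₗ (t x.1).hom.toLinearMap ∘ₗ C.ρ a⁻¹) fun a b hab =>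
    LinearMap.ext fun c => by
      have hk : a⁻¹ * b ∈ x.1.1 := QuotientGroup.leftRel_apply.mp hab
      calc B.ρ a ((t x.1).hom (C.ρ a⁻¹ c))
          = B.ρ a ((t x.1).hom (C.ρ (a⁻¹ * b) (C.ρ b⁻¹ c))) := by
            rw [← ρ_mul_apply, mul_inv_cancel_right]
        _ = B.ρ a (B.ρ (a⁻¹ * b) ((t x.1).hom (C.ρ b⁻¹ c))) :=
            congrArg (B.ρ a) (Rep.hom_comm_apply (t x.1) ⟨_, hk⟩ _)
        -- `erw`: the carrier of `(resF R G H).obj B` is `B.V` only after unfolding `resF`.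
        _ = B.ρ b ((t x.1).hom (C.ρ b⁻¹ c)) := by erw [← ρ_mul_apply, mul_inv_cancel_left]

lemma translatedSection_mk
    (t : ∀ H : {H : Subgroup G // Finite H}, (resF R G H.1).obj C ⟶ (resF R G H.1).obj B)
    (H : {H : Subgroup G // Finite H}) (a : G) (c : C.V) :
    translatedSection t ⟨H, a⟩ c = B.ρ a ((t H).hom (C.ρ a⁻¹ c)) :=
  rfl

lemma translatedSection_smul_apply
    (t : ∀ H : {H : Subgroup G // Finite H}, (resF R G H.1).obj C ⟶ (resF R G H.1).obj B)
    (u : G) (x : DeltaType G) (c : C.V) :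
    translatedSection t (u • x) (C.ρ u c) = B.ρ u (translatedSection t x c) := by
  obtain ⟨H, q⟩ := x
  induction q using QuotientGroup.induction_on with
  | H a =>
    change translatedSection t ⟨H, (u * a : G)⟩ (C.ρ u c) = _
    rw [translatedSection_mk, translatedSection_mk, mul_inv_rev, ρ_mul_apply, C.ρ.inv_self_apply]
    erw [ρ_mul_apply]

lemma translatedSection_apply_of_comp_eq_id {g : B ⟶ C}
    {t : ∀ H : {H : Subgroup G // Finite H}, (resF R G H.1).obj C ⟶ (resF R G H.1).obj B}
    (ht : ∀ H, t H ≫ (resF R G H.1).map g = 𝟙 _) (x : DeltaType G) (c : C.V) :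
    g.hom (translatedSection t x c) = c := by
  obtain ⟨H, q⟩ := x
  induction q using QuotientGroup.induction_on with
  | H a =>
    have hsec : g.hom ((t H).hom (C.ρ a⁻¹ c)) = C.ρ a⁻¹ c :=
      congrArg (fun φ : (resF R G H.1).obj C ⟶ (resF R G H.1).obj C => φ.hom (C.ρ a⁻¹ c)) (ht H)
    rw [translatedSection_mk]
    erw [Rep.hom_comm_apply, hsec]
    exact C.ρ.self_inv_apply a c

lemma smul_mk_one_of_mem {K : Subgroup G} (hK : Finite K) {k : G} (hk : k ∈ K) :
    k • (⟨⟨K, hK⟩, ((1 : G) : G ⧸ K)⟩ : DeltaType G) = ⟨⟨K, hK⟩, ((1 : G) : G ⧸ K)⟩ := by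
  change (⟨⟨K, hK⟩, ((k * 1 : G) : G ⧸ K)⟩ : DeltaType G) = _
  rw [(QuotientGroup.eq (a := k * 1) (b := 1)).mpr (by simpa using hk)]

end Delta

theorem FSplit_iff_split_after_tensor_RDelta_general
    (R : Type) [CommRing R] (G : Type) [Group G]
    (B C : Rep R G) (g : B ⟶ C) :
    (∀ K : Subgroup G, Finite K →
      ∃ s : (resF R G K).obj C ⟶ (resF R G K).obj B,
        s ≫ (resF R G K).map g = 𝟙 ((resF R G K).obj C)) ↔
    (∃ s : C ⊗ RDelta R G ⟶ B ⊗ RDelta R G,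
        s ≫ MonoidalCategory.whiskerRight g (RDelta R G) = 𝟙 (C ⊗ RDelta R G)) := by
  constructor
  · intro h
    choose t ht using fun H : {H : Subgroup G // Finite H} => h H.1 H.2
    exact exists_section_whiskerRight_of_equivariant_sections g (translatedSection t)
      (translatedSection_smul_apply t) (translatedSection_apply_of_comp_eq_id ht)
  · rintro ⟨s, hs⟩ K hK
    exact exists_res_section_of_section_whiskerRight (fun k hk => smul_mk_one_of_mem hK hk) hs

/-- A short exact sequence of `RG`-modules splits over every
finite subgroup of `G` iff it splits after applying `- ⊗_R RΔ`. -/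
theorem FSplit_iff_split_after_tensor_RDelta
    (R : Type) [CommRing R] (G : Type) [Group G]
    (A B C : Rep R G) (f : A ⟶ B) (g : B ⟶ C)
    (hf : Function.Injective f.hom) (hg : Function.Surjective g.hom)
    (hfg : Function.Exact f.hom g.hom) :
    (∀ K : Subgroup G, Finite K →
      ∃ s : (resF R G K).obj C ⟶ (resF R G K).obj B,
        s ≫ (resF R G K).map g = 𝟙 ((resF R G K).obj C)) ↔
    (∃ s : C ⊗ RDelta R G ⟶ B ⊗ RDelta R G,
        s ≫ MonoidalCategory.whiskerRight g (RDelta R G) = 𝟙 (C ⊗ RDelta R G)) :=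
  FSplit_iff_split_after_tensor_RDelta_general R G B C g

end FPaper
end
end

section
/- If an $RG$-module $N$ has finite $\mathfrak{F}$-projective dimension and $M$ is $\mathfrak{F}_G$-projective, then $\mathfrak{F}\mathrm{Ext}^i_{RG}(M, N) = 0$ for all $i \geq 1$. -/
open CategoryTheory CategoryTheory.Limits CategoryTheory.MonoidalCategory

noncomputable section
namespace FPaper

variable (R : Type) [CommRing R] (G : Type) [Group G]

variable {R G}

/-- `M` is `𝔉_G`-projective: it is a cokernel in an `𝔉`-strong `𝔉`-complete
resolution, i.e. an acyclic `𝔉`-split `ℤ`-indexed complex of `𝔉`-projectives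
which stays exact under `Hom(-, Q)` for every `𝔉`-projective `Q`. -/
def FGProjective (R : Type) [CommRing R] (G : Type) [Group G] (M : Rep R G) : Prop :=
  ∃ (T : ℤ → Rep R G) (d : ∀ n : ℤ, T (n+1) ⟶ T n) (π : T 0 ⟶ M),
    (∀ n, FProjective R G (T n)) ∧
    (∀ n : ℤ, Function.Exact (d (n+1)).hom (d n).hom) ∧
    (∀ K : Subgroup G, Finite K →
      ∃ s : ∀ n : ℤ, (resF R G K).obj (T n) ⟶ (resF R G K).obj (T (n+1)),
        ∀ n : ℤ, (resF R G K).map (d n) ≫ s n + s (n+1) ≫ (resF R G K).map (d (n+1)) = 𝟙 _) ∧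
    Function.Surjective π.hom ∧ Function.Exact (d 0).hom π.hom ∧
    (∀ Q : Rep R G, FProjective R G Q → ∀ (n : ℤ) (φ : T (n+1) ⟶ Q),
      d (n+1) ≫ φ = 0 → ∃ ψ : T n ⟶ Q, φ = d n ≫ ψ)

variable (R : Type) [CommRing R] (G : Type) [Group G]

/-- A right resolution `0 → M → T⁰ → T¹ → ⋯`. -/
structure CoRes (M : Rep R G) where
  T : ℕ → Rep R G
  ι : M ⟶ T 0
  d : ∀ n, T n ⟶ T (n+1)
  inj : Function.Injective ι.hom
  exact0 : Function.Exact ι.hom (d 0).hom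
  exact : ∀ n, Function.Exact (d n).hom (d (n+1)).hom

variable {R G}

/-- All terms of the right resolution are `𝔉`-projective. -/
def CoRes.FProj {M : Rep R G} (c : CoRes R G M) : Prop := ∀ n, FProjective R G (c.T n)

/-- The right resolution is `𝔉`-split: it admits an `RK`-linear chain
contraction for every finite subgroup `K ≤ G`. -/
def CoRes.FSplit {M : Rep R G} (c : CoRes R G M) : Prop :=
  ∀ K : Subgroup G, Finite K →
    ∃ (h0 : (resF R G K).obj (c.T 0) ⟶ (resF R G K).obj M)
      (h : ∀ n, (resF R G K).obj (c.T (n+1)) ⟶ (resF R G K).obj (c.T n)),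
      (resF R G K).map c.ι ≫ h0 = 𝟙 _ ∧
      h0 ≫ (resF R G K).map c.ι + (resF R G K).map (c.d 0) ≫ h 0 = 𝟙 _ ∧
      ∀ n, h n ≫ (resF R G K).map (c.d n)
        + (resF R G K).map (c.d (n+1)) ≫ h (n+1) = 𝟙 _

/-- The right resolution is `𝔉`-strong: it stays exact under `Hom_{RG}(-, Q)`
for every `𝔉`-projective `Q`. -/
def CoRes.FStrong {M : Rep R G} (c : CoRes R G M) : Prop :=
  ∀ Q : Rep R G, FProjective R G Q →
    (∀ φ : M ⟶ Q, ∃ ψ : c.T 0 ⟶ Q, c.ι ≫ ψ = φ) ∧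
    (∀ φ : c.T 0 ⟶ Q, c.ι ≫ φ = 0 → ∃ ψ : c.T 1 ⟶ Q, φ = c.d 0 ≫ ψ) ∧
    (∀ (n : ℕ) (φ : c.T (n+1) ⟶ Q), c.d n ≫ φ = 0 →
      ∃ ψ : c.T (n+2) ⟶ Q, φ = c.d (n+1) ≫ ψ)

/-!
An `𝔉`-projective module lifts against every map that is split over each finite subgroup: on
`W ⊗ R[G/H]` an `H`-equivariant splitting, transported along coset representatives, is already
`G`-equivariant. Hence any two `𝔉`-split `𝔉`-projective resolutions of `M` are chain homotopy
equivalent, and the vanishing of `𝔉Ext^{≥1}(M, Q)` for `𝔉`-projective `Q`, which the truncated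
`𝔉`-strong complete resolution exhibits, holds for all of them. For `N` of finite
`𝔉`-projective dimension, a cocycle `P_{n+1} → N` lifts to a chain map into a finite resolution
of `N`, which is then shown to be null-homotopic from the top down, one `𝔉`-projective term at a
time.
-/

section PermutationModule

variable {X : Type} [MulAction G X]

def ofMulActionDesc (V : Rep R G) (v : X → V)
    (hv : ∀ (g : G) (x : X), v (g • x) = V.ρ g (v x)) : Rep.ofMulAction R G X ⟶ V :=
  Rep.ofHom ⟨Finsupp.linearCombination R v ∘ₗ (MonoidAlgebra.coeffLinearEquiv R).toLinearMap,
    fun g => by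
      ext x
      simp [hv]⟩

theorem exists_tensor_ofMulAction_hom (W A : Rep R G) (val : X → (W.V →ₗ[R] A.V))
    (hval : ∀ (g : G) (x : X) (w : W), val (g • x) (W.ρ g w) = A.ρ g (val x w)) :
    ∃ L : W ⊗ Rep.ofMulAction R G X ⟶ A,
      ∀ (w : W) (x : X), L.hom (w ⊗ₜ MonoidAlgebra.single x 1) = val x w := by
  refine ⟨(Rep.tensorHomEquiv W _ A).symm (ofMulActionDesc ((Rep.ihom W).obj A) val ?_), ?_⟩
  · intro g x
    refine LinearMap.ext fun w => ?_
    change _ = A.ρ g (val x (W.ρ g⁻¹ w))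
    rw [← hval, ← Module.End.mul_apply, ← map_mul, mul_inv_cancel, map_one, Module.End.one_apply]
  · intro w x
    change Finsupp.linearCombination R val (MonoidAlgebra.coeffLinearEquiv R
      (MonoidAlgebra.single x 1)) w = val x w
    simp

theorem tensor_ofMulAction_hom_ext {W A : Rep R G} {f f' : W ⊗ Rep.ofMulAction R G X ⟶ A}
    (h : ∀ (w : W) (x : X), f.hom (w ⊗ₜ MonoidAlgebra.single x 1)
      = f'.hom (w ⊗ₜ MonoidAlgebra.single x 1)) : f = f' := by
  ext1
  apply Representation.IntertwiningMap.toLinearMap_injective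
  refine TensorProduct.ext' fun w y => ?_
  induction y using MonoidAlgebra.induction_linear with
  | zero => simp
  | add a b ha hb => simp only [TensorProduct.tmul_add, map_add] at *; rw [ha, hb]
  | single x r =>
    have hr : w ⊗ₜ[R] MonoidAlgebra.single x r = r • w ⊗ₜ[R] MonoidAlgebra.single x (1 : R) := by
      rw [← TensorProduct.tmul_smul, MonoidAlgebra.smul_single', mul_one]
    simp only [hr, map_smul]
    exact congrArg (r • ·) (h w x)

end PermutationModule

section CosetTransport

variable {H : Subgroup G} {A B : Rep R G}

def cosetTransport (σ : B.V →ₗ[R] A.V) (q : G ⧸ H) : B.V →ₗ[R] A.V :=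
  A.ρ q.out ∘ₗ σ ∘ₗ B.ρ q.out⁻¹

theorem cosetTransport_smul {σ : B.V →ₗ[R] A.V} (hσ : ∀ h ∈ H, ∀ b, σ (B.ρ h b) = A.ρ h (σ b))
    (g : G) (q : G ⧸ H) (b : B) :
    cosetTransport σ (g • q) (B.ρ g b) = A.ρ g (cosetTransport σ q b) := by
  obtain ⟨h, hh⟩ := QuotientGroup.mk_out_eq_mul H (g * q.out)
  have hq : g • q = ((g * q.out : G) : G ⧸ H) := by
    conv_lhs => rw [← QuotientGroup.out_eq' q]
    rfl
  change A.ρ (g • q).out (σ (B.ρ (g • q).out⁻¹ (B.ρ g b)))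
    = A.ρ g (A.ρ q.out (σ (B.ρ q.out⁻¹ b)))
  simp only [hq, hh, mul_inv_rev, map_mul, Module.End.mul_apply, Representation.inv_self_apply]
  rw [hσ _ (inv_mem h.2), Representation.self_inv_apply]

theorem comp_cosetTransport {C : Rep R G} {f : A ⟶ B} {g : B ⟶ C} {σ : B.V →ₗ[R] A.V}
    (hσ : ∀ y, g.hom y = 0 → f.hom (σ y) = y) (q : G ⧸ H) {b : B} (hb : g.hom b = 0) :
    f.hom (cosetTransport σ q b) = b := by
  have : g.hom (B.ρ q.out⁻¹ b) = 0 := by rw [Rep.hom_comm_apply, hb, map_zero]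
  change f.hom (A.ρ q.out (σ (B.ρ q.out⁻¹ b))) = b
  rw [Rep.hom_comm_apply, hσ _ this, Representation.self_inv_apply]

end CosetTransport

def HasFSectionOnKer {A B C : Rep R G} (f : A ⟶ B) (g : B ⟶ C) : Prop :=
  ∀ K : Subgroup G, Finite K → ∃ σ : (resF R G K).obj B ⟶ (resF R G K).obj A,
    ∀ y, g.hom y = 0 → f.hom (σ.hom y) = y

theorem hasFSectionOnKer_of_contraction {A B C : Rep R G} {f : A ⟶ B} {g : B ⟶ C}
    (h : ∀ K : Subgroup G, Finite K →
      ∃ (σ : (resF R G K).obj B ⟶ (resF R G K).obj A)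
        (τ : (resF R G K).obj C ⟶ (resF R G K).obj B),
        (resF R G K).map g ≫ τ + σ ≫ (resF R G K).map f = 𝟙 _) :
    HasFSectionOnKer f g := by
  intro K hK
  obtain ⟨σ, τ, hστ⟩ := h K hK
  refine ⟨σ, fun y hy => ?_⟩
  have hg : ((resF R G K).map g).hom y = 0 := hy
  have : τ.hom (((resF R G K).map g).hom y) + ((resF R G K).map f).hom (σ.hom y) = y :=
    congr(Rep.Hom.hom $hστ y)
  rwa [hg, map_zero, zero_add] at this

theorem exists_lift_tensor_RDelta {A B C : Rep R G} (W : Rep R G) {f : A ⟶ B} {g : B ⟶ C}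
    (hfg : HasFSectionOnKer f g) (γ : W ⊗ RDelta R G ⟶ B) (hγ : γ ≫ g = 0) :
    ∃ l : W ⊗ RDelta R G ⟶ A, l ≫ f = γ := by
  choose σ hσ using hfg
  let γδ (δ : DeltaType G) : W.V →ₗ[R] B.V :=
    γ.hom.toLinearMap ∘ₗ (TensorProduct.mk R W.V _).flip (MonoidAlgebra.single δ 1)
  have hγδ (δ : DeltaType G) (w : W) : g.hom (γδ δ w) = 0 := by
    change (γ ≫ g).hom _ = 0
    rw [hγ]
    rfl
  have hγδ_smul (k : G) (δ : DeltaType G) (w : W) : γδ (k • δ) (W.ρ k w) = B.ρ k (γδ δ w) := by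
    refine Eq.trans ?_ (Rep.hom_comm_apply γ k (w ⊗ₜ MonoidAlgebra.single δ 1))
    exact congrArg (fun y => γ.hom (W.ρ k w ⊗ₜ y))
      (Representation.ofMulAction_single k δ (1 : R)).symm
  let val (δ : DeltaType G) : W.V →ₗ[R] A.V :=
    cosetTransport (σ δ.1.1 δ.1.2).hom.toLinearMap δ.2 ∘ₗ γδ δ
  obtain ⟨L, hL⟩ := exists_tensor_ofMulAction_hom W A val fun k δ w =>
    (congrArg _ (hγδ_smul k δ w)).trans
      (cosetTransport_smul (fun h hh b => Rep.hom_comm_apply (σ _ _) ⟨h, hh⟩ b) k δ.2 _)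
  refine ⟨L, tensor_ofMulAction_hom_ext (X := DeltaType G) fun w δ => ?_⟩
  change f.hom (L.hom _) = _
  rw [hL]
  exact comp_cosetTransport (hσ _ _) _ (hγδ δ w)

theorem FProjective.exists_lift {A B C Q : Rep R G} (hQ : FProjective R G Q) {f : A ⟶ B}
    {g : B ⟶ C} (hfg : HasFSectionOnKer f g) (γ : Q ⟶ B) (hγ : γ ≫ g = 0) :
    ∃ l : Q ⟶ A, l ≫ f = γ := by
  obtain ⟨W, i, r, hir⟩ := hQ
  obtain ⟨l, hl⟩ :=
    exists_lift_tensor_RDelta W hfg (r ≫ γ) (by rw [Category.assoc, hγ, comp_zero])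
  exact ⟨i ≫ l, by rw [Category.assoc, hl, ← Category.assoc, hir, Category.id_comp]⟩

theorem comp_eq_zero_of_exact {K : Type} [Monoid K] {X Y Z : Rep R K} {f : X ⟶ Y} {g : Y ⟶ Z}
    (h : Function.Exact f.hom g.hom) : f ≫ g = 0 := by
  ext x
  exact h.apply_apply_eq_zero x

theorem exists_comp_eq_of_surjective {K : Type} [Monoid K] {X Y Z : Rep R K} {π : X ⟶ Y}
    (hπ : Function.Surjective π.hom) {p : X ⟶ Z} (hp : ∀ x, π.hom x = 0 → p.hom x = 0) :
    ∃ t : Y ⟶ Z, π ≫ t = p := by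
  let e := LinearMap.quotKerEquivOfSurjective π.hom.toLinearMap hπ
  let t : Y.V →ₗ[R] Z.V :=
    (LinearMap.ker π.hom.toLinearMap).liftQ p.hom.toLinearMap (fun x hx => hp x hx) ∘ₗ
      e.symm.toLinearMap
  have ht (x : X) : t (π.hom x) = p.hom x := by
    have : e.symm (π.hom x) = Submodule.Quotient.mk x := e.symm_apply_eq.mpr rfl
    simp only [t, LinearMap.comp_apply, LinearEquiv.coe_coe, this]
    exact Submodule.liftQ_apply _ _ _
  refine ⟨Rep.ofHom ⟨t, fun k => LinearMap.ext fun y => ?_⟩, Rep.hom_ext ?_⟩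
  · obtain ⟨x, rfl⟩ := hπ y
    simp only [LinearMap.comp_apply]
    rw [← Rep.hom_comm_apply, ht, ht, Rep.hom_comm_apply]
  · ext x
    exact ht x

theorem exists_section_of_contraction {K : Type} [Monoid K] {X₂ X₁ X₀ M : Rep R K}
    {d₁ : X₂ ⟶ X₁} {d₀ : X₁ ⟶ X₀} {π : X₀ ⟶ M} (hπ : Function.Surjective π.hom)
    (hexact : Function.Exact d₀.hom π.hom) (hd : d₁ ≫ d₀ = 0) {s₀ : X₀ ⟶ X₁} {s₁ : X₁ ⟶ X₂}
    (hs : d₀ ≫ s₀ + s₁ ≫ d₁ = 𝟙 X₁) :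
    ∃ t : M ⟶ X₀, t ≫ π = 𝟙 M ∧ π ≫ t + s₀ ≫ d₀ = 𝟙 X₀ := by
  have hpπ : (𝟙 X₀ - s₀ ≫ d₀) ≫ π = π := by
    rw [Preadditive.sub_comp, Category.assoc, comp_eq_zero_of_exact hexact, comp_zero, sub_zero,
      Category.id_comp]
  have hd₀ : d₀ ≫ (𝟙 X₀ - s₀ ≫ d₀) = 0 := by
    rw [Preadditive.comp_sub, Category.comp_id, ← Category.assoc, eq_sub_of_add_eq hs,
      Preadditive.sub_comp, Category.id_comp, Category.assoc, hd, comp_zero, sub_zero, sub_self]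
  have hker (x : X₀) (hx : π.hom x = 0) : (𝟙 X₀ - s₀ ≫ d₀).hom x = 0 := by
    obtain ⟨y, rfl⟩ := (hexact x).mp hx
    exact congr(Rep.Hom.hom $hd₀ y)
  obtain ⟨t, ht⟩ := exists_comp_eq_of_surjective hπ hker
  rw [← ht] at hpπ
  refine ⟨t, ?_, by rw [ht, sub_add_cancel]⟩
  ext m
  obtain ⟨x, rfl⟩ := hπ m
  exact congr(Rep.Hom.hom $hpπ x)

theorem exists_seq_of_exists_next {X : ℕ → Type*} (rel : ∀ k, X k → X (k+1) → Prop) (x₀ : X 0)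
    (h₀ : ∃ y, rel 0 x₀ y) (next : ∀ k x y, rel k x y → ∃ z, rel (k+1) y z) :
    ∃ x : ∀ k, X k, x 0 = x₀ ∧ ∀ k, rel k (x k) (x (k+1)) := by
  choose y₀ hy₀ using h₀
  choose z hz using next
  let pair (k : ℕ) : {p : X k × X (k+1) // rel k p.1 p.2} :=
    Nat.rec ⟨(x₀, y₀), hy₀⟩ (fun k p => ⟨(p.1.2, z k _ _ p.2), hz k _ _ p.2⟩) k
  exact ⟨fun k => (pair k).1.1, rfl, fun k => (pair k).2⟩

namespace Res

variable {M N : Rep R G}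

theorem d_comp_ε (P : Res R G M) : P.d 0 ≫ P.ε = 0 := comp_eq_zero_of_exact P.exact0

theorem d_comp_d (P : Res R G M) (k : ℕ) : P.d (k+1) ≫ P.d k = 0 :=
  comp_eq_zero_of_exact (P.exact k)

def FExtVanishes (P : Res R G M) (Q : Rep R G) : Prop :=
  ∀ (n : ℕ) (φ : P.P (n+1) ⟶ Q), P.d (n+1) ≫ φ = 0 → ∃ ψ : P.P n ⟶ Q, φ = P.d n ≫ ψ

theorem FSplit.hasFSectionOnKer_ε {P : Res R G M} (hP : P.FSplit) :
    HasFSectionOnKer P.ε (0 : M ⟶ M) := by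
  intro K hK
  obtain ⟨t, -, ht, -⟩ := hP K hK
  exact ⟨t, fun y _ => congr(Rep.Hom.hom $ht y)⟩

theorem FSplit.hasFSectionOnKer_d_zero {P : Res R G M} (hP : P.FSplit) :
    HasFSectionOnKer (P.d 0) P.ε :=
  hasFSectionOnKer_of_contraction fun K hK =>
    let ⟨t, s, _, h, _⟩ := hP K hK
    ⟨s 0, t, h⟩

theorem FSplit.hasFSectionOnKer_d {P : Res R G M} (hP : P.FSplit) (k : ℕ) :
    HasFSectionOnKer (P.d (k+1)) (P.d k) :=
  hasFSectionOnKer_of_contraction fun K hK =>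
    let ⟨_, s, _, _, h⟩ := hP K hK
    ⟨s (k+1), s k, h k⟩

theorem exists_chainMap (B : Res R G N) (hB : B.FSplit) {A : ℕ → Rep R G}
    (dA : ∀ k, A (k+1) ⟶ A k) (hA : ∀ k, FProjective R G (A k))
    (hdA : ∀ k, dA (k+1) ≫ dA k = 0) (γ : A 0 ⟶ N) (hγ : dA 0 ≫ γ = 0) :
    ∃ u : ∀ k, A k ⟶ B.P k, u 0 ≫ B.ε = γ ∧ ∀ k, u (k+1) ≫ B.d k = dA k ≫ u k := by
  obtain ⟨u₀, hu₀⟩ := (hA 0).exists_lift hB.hasFSectionOnKer_ε γ comp_zero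
  obtain ⟨u, rfl, hu⟩ := exists_seq_of_exists_next (X := fun k => A k ⟶ B.P k)
    (fun k x y => y ≫ B.d k = dA k ≫ x) u₀
    ((hA 1).exists_lift hB.hasFSectionOnKer_d_zero _ (by rw [Category.assoc, hu₀, hγ]))
    (fun k x y hxy => (hA (k+2)).exists_lift (hB.hasFSectionOnKer_d k) _
      (by rw [Category.assoc, hxy, ← Category.assoc, hdA, zero_comp]))
  exact ⟨u, hu₀, hu⟩

theorem exists_homotopy (P : Res R G M) (hP : P.FSplit) (hPp : P.FProj)
    {w : ∀ k, P.P k ⟶ P.P k} (hw₀ : w 0 ≫ P.ε = P.ε) (hw : ∀ k, w (k+1) ≫ P.d k = P.d k ≫ w k) :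
    ∃ s : ∀ k, P.P k ⟶ P.P (k+1),
      ∀ k, w (k+1) - 𝟙 _ = s (k+1) ≫ P.d (k+1) + P.d k ≫ s k := by
  have hcycle (k : ℕ) (y : P.P k ⟶ P.P (k+1)) :
      (w (k+1) - 𝟙 _ - P.d k ≫ y) ≫ P.d k = P.d k ≫ (w k - 𝟙 _ - y ≫ P.d k) := by
    simp only [Preadditive.sub_comp, Preadditive.comp_sub, hw, Category.assoc, Category.id_comp,
      Category.comp_id]
  obtain ⟨s₀, hs₀⟩ := (hPp 0).exists_lift hP.hasFSectionOnKer_d_zero (w 0 - 𝟙 _)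
    (by rw [Preadditive.sub_comp, hw₀, Category.id_comp, sub_self])
  have lift (k : ℕ) (x : P.P k ⟶ P.P (k+1)) (hx : (w (k+1) - 𝟙 _ - P.d k ≫ x) ≫ P.d k = 0) :
      ∃ y, w (k+1) - 𝟙 _ = y ≫ P.d (k+1) + P.d k ≫ x := by
    obtain ⟨y, hy⟩ := (hPp (k+1)).exists_lift (hP.hasFSectionOnKer_d k) _ hx
    exact ⟨y, sub_eq_iff_eq_add.mp hy.symm⟩
  obtain ⟨s, -, hs⟩ := exists_seq_of_exists_next (X := fun k => P.P k ⟶ P.P (k+1))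
    (fun k x y => w (k+1) - 𝟙 _ = y ≫ P.d (k+1) + P.d k ≫ x) s₀
    (lift 0 s₀ (by rw [hcycle, hs₀, sub_self, comp_zero]))
    (fun k x y hxy => lift (k+1) y (by rw [hcycle, sub_eq_of_eq_add' hxy, ← Category.assoc,
      d_comp_d, zero_comp]))
  exact ⟨s, hs⟩

theorem FExtVanishes.of_res {T P : Res R G M} {Q : Rep R G} (h : T.FExtVanishes Q)
    (hT : T.FSplit) (hTp : T.FProj) (hP : P.FSplit) (hPp : P.FProj) : P.FExtVanishes Q := by
  obtain ⟨u, hu₀, hu⟩ := P.exists_chainMap hP T.d hTp T.d_comp_d T.ε T.d_comp_ε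
  obtain ⟨v, hv₀, hv⟩ := T.exists_chainMap hT P.d hPp P.d_comp_d P.ε P.d_comp_ε
  obtain ⟨s, hs⟩ := P.exists_homotopy hP hPp (w := fun k => v k ≫ u k)
    (by rw [Category.assoc, hu₀, hv₀]) (fun k => by simp only [Category.assoc, hu, reassoc_of% hv])
  intro n φ hφ
  obtain ⟨ψ, hψ⟩ := h n (u (n+1) ≫ φ)
    (by rw [← Category.assoc, ← hu, Category.assoc, hφ, comp_zero])
  refine ⟨v n ≫ ψ - s n ≫ φ, ?_⟩
  have hvu : P.d n ≫ v n ≫ ψ = (v (n+1) ≫ u (n+1)) ≫ φ := by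
    rw [← reassoc_of% hv, ← hψ, Category.assoc]
  have hs' : (v (n+1) ≫ u (n+1) - 𝟙 _) ≫ φ = P.d n ≫ s n ≫ φ := by
    rw [hs, Preadditive.add_comp, Category.assoc, hφ, comp_zero, zero_add, Category.assoc]
  rw [Preadditive.comp_sub, hvu, ← hs', Preadditive.sub_comp, Category.id_comp, sub_sub_cancel]

theorem fExtVanishes_of_lengthLe (P : Res R G M) (hPp : P.FProj)
    (hP : ∀ Q, FProjective R G Q → P.FExtVanishes Q) (B : Res R G N) (hB : B.FSplit)
    (hBp : B.FProj) {m : ℕ} (hm : B.LengthLe m) : P.FExtVanishes N := by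
  intro n φ hφ
  obtain ⟨Φ, hΦ₀, hΦ⟩ := B.exists_chainMap hB (A := fun j => P.P (n+j+1))
    (fun j => P.d (n+j+1)) (fun _ => hPp _) (fun _ => P.d_comp_d _) φ hφ
  let NullHomotopicAt (j : ℕ) : Prop := ∃ (ψ : P.P (n+j) ⟶ B.P j) (ψ' : P.P (n+j+1) ⟶ B.P (j+1)),
    Φ j = P.d (n+j) ≫ ψ + ψ' ≫ B.d j
  have top : NullHomotopicAt (m+1) := ⟨0, 0, (hm (m+1) (lt_add_one m)).eq_of_tgt _ _⟩
  have descend (j : ℕ) : NullHomotopicAt (j+1) → NullHomotopicAt j := by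
    rintro ⟨ψ, ψ', hψ⟩
    obtain ⟨χ, hχ⟩ := hP _ (hBp j) (n+j) (Φ j - ψ ≫ B.d j) (by
      rw [Preadditive.comp_sub, ← hΦ, hψ, Preadditive.add_comp, Category.assoc, Category.assoc,
        B.d_comp_d, comp_zero, add_zero]
      exact sub_self _)
    exact ⟨χ, ψ, by rw [← hχ, sub_add_cancel]⟩
  obtain ⟨ψ, ψ', hψ⟩ : NullHomotopicAt 0 :=
    Nat.decreasingInduction (motive := fun j _ => NullHomotopicAt j) (fun j _ => descend j) top
      (Nat.zero_le _)
  refine ⟨ψ ≫ B.ε, ?_⟩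
  rw [← hΦ₀, hψ, Preadditive.add_comp, Category.assoc, Category.assoc, B.d_comp_ε, comp_zero,
    add_zero]
  rfl

end Res

theorem FGProjective.exists_res {M : Rep R G} (hM : FGProjective R G M) :
    ∃ T : Res R G M, T.FSplit ∧ T.FProj ∧ ∀ Q, FProjective R G Q → T.FExtVanishes Q := by
  obtain ⟨T, d, π, hTp, hexact, hsplit, hπ, hexact₀, hstrong⟩ := hM
  refine ⟨⟨fun k => T k, fun k => d k, π, hπ, hexact₀, fun k => hexact k⟩, fun K hK => ?_,
    fun k => hTp k, fun Q hQ n => hstrong Q hQ n⟩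
  obtain ⟨s, hs⟩ := hsplit K hK
  obtain ⟨t, ht, htπ⟩ := exists_section_of_contraction (K := K) (π := (resF R G K).map π) hπ
    hexact₀ (comp_eq_zero_of_exact (hexact 0)) (hs 0)
  exact ⟨t, fun k => s k, ht, htπ, fun k => hs k⟩

/-- If `N` has finite `𝔉`-projective dimension and `M` is
`𝔉_G`-projective, then `𝔉Ext^i_{RG}(M, N) = 0` for all `i ≥ 1` (computed from
any `𝔉`-split `𝔉`-projective resolution of `M`). -/
theorem fExt_vanishes_of_fgProjective (R : Type) [CommRing R] (G : Type) [Group G]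
    (M N : Rep R G)
    (hN : ∃ (n : ℕ) (res : Res R G N), res.FSplit ∧ res.FProj ∧ res.LengthLe n)
    (hM : FGProjective R G M) :
    ∀ P : Res R G M, P.FSplit → P.FProj →
      ∀ (n : ℕ) (φ : P.P (n+1) ⟶ N), P.d (n+1) ≫ φ = 0 →
        ∃ ψ : P.P n ⟶ N, φ = P.d n ≫ ψ := by
  obtain ⟨m, B, hB, hBp, hm⟩ := hN
  obtain ⟨T, hT, hTp, hTQ⟩ := hM.exists_res
  intro P hP hPp
  exact P.fExtVanishes_of_lengthLe hPp (fun Q hQ => (hTQ Q hQ).of_res hT hTp hP hPp) B hB hBp hm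

end FPaper
end
end
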